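/- Let h ∈ ℕ and W(a) := 1_{[−2h,2h]}(a)·max(2h−3|a|, |a|−2h). Then for every integer ℓ ≥ 1, Σ_{a≠0} W(aℓ) ≪ h, with an absolute implied constant (uniformly in ℓ). -/

import Mathlib

/-!
By symmetry the sum is twice `∑_{1 ≤ a ≤ 2h} W(aℓ)`. With `k = ⌊h/ℓ⌋` and `m = ⌊2h/ℓ⌋` its
terms are `2h - 3aℓ` for `a ≤ k`, `aℓ - 2h` for `k < a ≤ m` and `0` beyond, so it is a sum of two
arithmetic progressions. As `m ∈ {2k, 2k + 1}` it evaluates to `-kℓ` or `(k + 1)ℓ - 2h`, both of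
absolute value at most `h`: the positive and negative lobes of `W` have the same area, so the
main terms of the two progressions cancel.
-/

open Finset

noncomputable section

/-- The weight `W(a) = 1_{[-2h,2h]}(a) · max(2h - 3|a|, |a| - 2h)`. -/
def Wt (h : ℕ) (a : ℤ) : ℝ :=
  if |a| ≤ 2 * (h : ℤ) then max (2 * (h : ℝ) - 3 * |(a : ℝ)|) (|(a : ℝ)| - 2 * (h : ℝ)) else 0

lemma Wt_neg (h : ℕ) (b : ℤ) : Wt h (-b) = Wt h b := by
  simp only [Wt, Int.cast_neg, abs_neg]

lemma Wt_of_nonneg_of_le {h : ℕ} {b : ℤ} (hb₀ : 0 ≤ b) (hbh : b ≤ h) :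
    Wt h b = 2 * h - 3 * b := by
  have hb₀' : (0 : ℝ) ≤ b := by exact_mod_cast hb₀
  have hbh' : (b : ℝ) ≤ h := by exact_mod_cast hbh
  rw [Wt, if_pos (by rw [abs_of_nonneg hb₀]; omega), abs_of_nonneg hb₀', max_eq_left (by linarith)]

lemma Wt_of_le_of_le {h : ℕ} {b : ℤ} (hhb : (h : ℤ) ≤ b) (hb : b ≤ 2 * h) :
    Wt h b = b - 2 * h := by
  have hhb' : (h : ℝ) ≤ b := by exact_mod_cast hhb
  have hb₀' : (0 : ℝ) ≤ b := (Nat.cast_nonneg h).trans hhb'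
  rw [Wt, if_pos (by rw [abs_of_nonneg (by omega)]; omega), abs_of_nonneg hb₀',
    max_eq_right (by linarith)]

lemma Wt_of_lt {h : ℕ} {b : ℤ} (hb : 2 * (h : ℤ) < b) : Wt h b = 0 := by
  rw [Wt, if_neg (by rw [abs_of_nonneg (by omega)]; omega)]

lemma sum_filter_ne_zero_Icc_neg_of_even {M : Type*} [AddCommMonoid M] (N : ℤ) {g : ℤ → M}
    (hg : ∀ a, g (-a) = g a) :
    ∑ a ∈ (Icc (-N) N).filter (· ≠ 0), g a = 2 • ∑ a ∈ Icc 1 N, g a := by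
  have hsplit : (Icc (-N) N).filter (· ≠ 0) = Icc (-N) (-1) ∪ Icc 1 N := by
    ext a; simp only [mem_filter, mem_union, mem_Icc]; omega
  have hdisj : Disjoint (Icc (-N) (-1)) (Icc 1 N) := by
    rw [disjoint_left]; intro a ha hb; simp only [mem_Icc] at ha hb; omega
  have hneg : ∑ a ∈ Icc (-N) (-1), g a = ∑ a ∈ Icc 1 N, g a :=
    sum_nbij' Neg.neg Neg.neg (by intro a ha; simp only [mem_Icc] at *; omega)
      (by intro a ha; simp only [mem_Icc] at *; omega) (fun a _ => neg_neg a)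
      (fun a _ => neg_neg a) (fun a _ => (hg a).symm)
  rw [hsplit, sum_union hdisj, hneg, two_nsmul]

lemma sum_Icc_one_natCast {M : Type*} [AddCommMonoid M] (n : ℕ) (g : ℤ → M) :
    ∑ a ∈ Icc (1 : ℤ) n, g a = ∑ a ∈ Ioc 0 n, g a := by
  have hmap : Icc (1 : ℤ) n = (Ioc 0 n).map Nat.castEmbedding := by
    ext a
    simp only [mem_Icc, mem_map, mem_Ioc, Nat.castEmbedding_apply]
    constructor
    · intro ha; exact ⟨a.toNat, by omega, by omega⟩
    · rintro ⟨b, hb, rfl⟩; omega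
  rw [hmap, sum_map]
  rfl

lemma two_mul_sum_Ioc_linear {R : Type*} [CommRing R] {p q : ℕ} (hpq : p ≤ q) (α β : R) :
    2 * ∑ a ∈ Ioc p q, (α + β * a) = (q - p) * (2 * α + β * (p + q + 1)) := by
  induction q, hpq using Nat.le_induction with
  | base => simp
  | succ q hpq ih =>
    rw [sum_Ioc_succ_top hpq, mul_add, ih]
    push_cast
    ring

lemma two_mul_sum_Wt_mul {h ℓ k m : ℕ} (hℓ : 0 < ℓ) (hk : k * ℓ ≤ h) (hk' : h < (k + 1) * ℓ)
    (hm : m * ℓ ≤ 2 * h) (hm' : 2 * h < (m + 1) * ℓ) :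
    2 * ∑ a ∈ Ioc 0 (2 * h), Wt h (a * ℓ)
      = k * (4 * h - 3 * ℓ * (k + 1)) + (m - k) * (ℓ * (k + m + 1) - 4 * h) := by
  have hkm : k ≤ m :=
    Nat.lt_succ_iff.mp (Nat.lt_of_mul_lt_mul_right (by omega : k * ℓ < (m + 1) * ℓ))
  have hmh : m ≤ 2 * h := le_trans (Nat.le_mul_of_pos_right m hℓ) hm
  have hlow : ∑ a ∈ Ioc 0 k, Wt h (a * ℓ) = ∑ a ∈ Ioc 0 k, (2 * h + (-3 * ℓ : ℝ) * a) := by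
    refine sum_congr rfl fun a ha => ?_
    have : a * ℓ ≤ h := (Nat.mul_le_mul_right ℓ (mem_Ioc.mp ha).2).trans hk
    rw [Wt_of_nonneg_of_le (by positivity) (by exact_mod_cast this)]
    push_cast; ring
  have hmid : ∑ a ∈ Ioc k m, Wt h (a * ℓ) = ∑ a ∈ Ioc k m, (-2 * h + (ℓ : ℝ) * a) := by
    refine sum_congr rfl fun a ha => ?_
    have h₁ : h < a * ℓ := hk'.trans_le (Nat.mul_le_mul_right ℓ (mem_Ioc.mp ha).1)
    have h₂ : a * ℓ ≤ 2 * h := (Nat.mul_le_mul_right ℓ (mem_Ioc.mp ha).2).trans hm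
    rw [Wt_of_le_of_le (by exact_mod_cast h₁.le) (by exact_mod_cast h₂)]
    push_cast; ring
  have hhigh : ∑ a ∈ Ioc m (2 * h), Wt h (a * ℓ) = 0 := by
    refine sum_eq_zero fun a ha => Wt_of_lt ?_
    have : 2 * h < a * ℓ := hm'.trans_le (Nat.mul_le_mul_right ℓ (mem_Ioc.mp ha).1)
    exact_mod_cast this
  rw [← sum_Ioc_consecutive _ (Nat.zero_le k) (hkm.trans hmh), ← sum_Ioc_consecutive _ hkm hmh,
    hlow, hmid, hhigh, add_zero, mul_add, two_mul_sum_Ioc_linear (Nat.zero_le k),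
    two_mul_sum_Ioc_linear hkm]
  push_cast
  ring

lemma abs_sum_Wt_mul_le {h ℓ : ℕ} (hℓ : 0 < ℓ) : |∑ a ∈ Ioc 0 (2 * h), Wt h (a * ℓ)| ≤ h := by
  set k := h / ℓ
  set m := 2 * h / ℓ
  have hk : k * ℓ ≤ h := Nat.div_mul_le_self h ℓ
  have hk' : h < (k + 1) * ℓ := by rw [add_one_mul]; exact Nat.lt_div_mul_add hℓ
  have hm : m * ℓ ≤ 2 * h := Nat.div_mul_le_self (2 * h) ℓ
  have hm' : 2 * h < (m + 1) * ℓ := by rw [add_one_mul]; exact Nat.lt_div_mul_add hℓ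
  have hsum := two_mul_sum_Wt_mul hℓ hk hk' hm hm'
  have hmk : m = 2 * k ∨ m = 2 * k + 1 := by
    have h₁ : 2 * k < m + 1 := Nat.lt_of_mul_lt_mul_right (by nlinarith : 2 * k * ℓ < (m + 1) * ℓ)
    have h₂ : m < 2 * k + 2 := Nat.lt_of_mul_lt_mul_right (by nlinarith : m * ℓ < (2 * k + 2) * ℓ)
    omega
  have hk₁ : (k : ℝ) * ℓ ≤ h := by exact_mod_cast hk
  have hk₂ : (h : ℝ) < (k + 1) * ℓ := by exact_mod_cast hk'
  rw [abs_le]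
  rcases hmk with hmk | hmk
  · rw [hmk] at hsum
    push_cast at hsum
    constructor <;> nlinarith
  · have hm₁ : ((2 * k + 1 : ℕ) : ℝ) * ℓ ≤ 2 * h := by rw [← hmk]; exact_mod_cast hm
    rw [hmk] at hsum
    push_cast at hsum hm₁
    constructor <;> nlinarith

theorem statement12 :
    ∃ C : ℝ, 0 < C ∧ ∀ h ℓ : ℕ, 1 ≤ ℓ →
      |∑ a ∈ (Finset.Icc (-(2 * (h : ℤ))) (2 * (h : ℤ))).filter (· ≠ 0),
          Wt h (a * (ℓ : ℤ))| ≤ C * (h : ℝ) := by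
  refine ⟨2, two_pos, fun h ℓ hℓ => ?_⟩
  rw [sum_filter_ne_zero_Icc_neg_of_even _ fun a => by rw [neg_mul, Wt_neg],
    show 2 * (h : ℤ) = (2 * h : ℕ) by push_cast; rfl, sum_Icc_one_natCast, nsmul_eq_mul,
    abs_mul, Nat.cast_ofNat, abs_two]
  exact mul_le_mul_of_nonneg_left (abs_sum_Wt_mul_le hℓ) zero_le_two
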